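/- In any execution of the manoeuvre negotiation protocol, the invariant holds that status ∈ {TRYGET} implies the timer tRETRY is active, and status ∈ {GRANT, GRANTGET} implies the timer tGRANT is active; moreover, tRETRY and tGRANT are never simultaneously active. -/
import Mathlib

inductive NStatus | NORMAL | GET | TRYGET | GRANT | GRANTGET | EXECUTE
deriving DecidableEq

/-- Agent state: status plus the two timer activity flags. -/
structure NState where
  status : NStatus
  activeRETRY : Bool
  activeGRANT : Bool

open NStatus in
/-- Transitions of the manoeuvre negotiation protocol (timers updated accordingly). -/
inductive NStep : NState → NState → Prop
  | tryManGet (s : NStatus) (hs : s = NORMAL ∨ s = TRYGET) :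
      NStep ⟨s, false, false⟩ ⟨GET, true, false⟩
  | tryManTryget (s : NStatus) (hs : s = NORMAL ∨ s = TRYGET) :
      NStep ⟨s, false, false⟩ ⟨TRYGET, true, false⟩
  | tryManGrant : NStep ⟨GRANT, false, true⟩ ⟨GRANTGET, false, true⟩
  | retryExpire : NStep ⟨GET, true, false⟩ ⟨TRYGET, true, false⟩
  | recvGetNormal : NStep ⟨NORMAL, false, false⟩ ⟨GRANT, false, true⟩
  | recvGetGet : NStep ⟨GET, true, false⟩ ⟨GRANTGET, false, true⟩
  | recvGetTryget : NStep ⟨TRYGET, true, false⟩ ⟨GRANTGET, false, true⟩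
  | recvReleaseGrant : NStep ⟨GRANT, false, true⟩ ⟨NORMAL, false, false⟩
  | recvReleaseGrantget : NStep ⟨GRANTGET, false, true⟩ ⟨TRYGET, true, false⟩
  | allRepliesExec : NStep ⟨GET, true, false⟩ ⟨EXECUTE, false, false⟩
  | allRepliesDeny : NStep ⟨GET, true, false⟩ ⟨TRYGET, true, false⟩
  | exitDone : NStep ⟨EXECUTE, false, false⟩ ⟨NORMAL, false, false⟩

open NStatus in
/-- Timer consistency invariant (Corollary 1). -/
def TimerInv (s : NState) : Prop :=
  (s.status = TRYGET → s.activeRETRY = true) ∧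
  ((s.status = GRANT ∨ s.status = GRANTGET) → s.activeGRANT = true) ∧
  ¬ (s.activeRETRY = true ∧ s.activeGRANT = true)

open NStatus in
/-- In every execution of the protocol (any state reachable from the initial state),
the timer-consistency invariant holds. -/
theorem timer_invariant_holds
    (s : ℕ → NState)
    (hinit : s 0 = ⟨NORMAL, false, false⟩)
    (hstep : ∀ n, NStep (s n) (s (n + 1))) :
    ∀ n, TimerInv (s n) := by
  intro n
  cases n with
  | zero => rw [hinit]; simp [TimerInv]
  | succ k =>
    have h := hstep k
    generalize hx : s (k + 1) = t at h ⊢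
    generalize hy : s k = u at h
    cases h <;> simp [TimerInv]
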